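/- arXiv:2303.15746 — 6 statements merged into one kernel-verified Lean document; each statement's English description precedes it below -/
import Mathlib

section
/- For any real numbers s_1,...,s_q and λ > 0, the softmax-weighted average satisfies ∑_{i=1}^q [exp(s_i/λ)/∑_j exp(s_j/λ)] · s_i ≥ max_i s_i − λC, where C = W((q−1)/e) and W is the Lambert W function (the solution of W e^W = (q−1)/e). -/
open Real Finset

/-!
With `x i = (s i - s i₀) / lam` for a maximising index `i₀`, the claim is equivalent to
`0 ≤ ∑ i, exp (x i) * (x i + C)`. The term at `i₀` is `C`, and each of the other `q - 1` terms
is at least `min_t exp t * (t + C) = -exp (-(C + 1))`. The Lambert equation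
`C * exp C = (q - 1) / exp 1` says precisely that `(q - 1) * exp (-(C + 1)) = C`.
-/

/-- The minimum of `t ↦ exp t * (t + C)` is attained at `t = -(C + 1)`. -/
lemma neg_exp_neg_add_one_le_exp_mul_add (C t : ℝ) : -exp (-(C + 1)) ≤ exp t * (t + C) := by
  have h : -(t + C) ≤ exp (-(t + C + 1)) := by linarith [add_one_le_exp (-(t + C + 1))]
  have h' : exp t * exp (-(t + C + 1)) = exp (-(C + 1)) := by rw [← exp_add]; ring_nf
  nlinarith [exp_pos t]

lemma sum_exp_mul_add_nonneg {ι : Type*} [Fintype ι] (x : ι → ℝ) {i₀ : ι} (hx : x i₀ = 0)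
    {C : ℝ} (hC : ((Fintype.card ι : ℝ) - 1) * exp (-(C + 1)) ≤ C) :
    0 ≤ ∑ i, exp (x i) * (x i + C) := by
  classical
  have hrest : ((Fintype.card ι : ℝ) - 1) * -exp (-(C + 1))
      ≤ ∑ i ∈ univ.erase i₀, exp (x i) * (x i + C) := by
    rw [← card_univ, ← cast_card_erase_of_mem (mem_univ i₀), ← nsmul_eq_mul]
    exact card_nsmul_le_sum _ _ _ fun i _ ↦ neg_exp_neg_add_one_le_exp_mul_add C (x i)
  rw [← add_sum_erase _ _ (mem_univ i₀), hx, exp_zero]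
  linarith

lemma sub_mul_le_sum_softmax_mul {ι : Type*} [Fintype ι] (s : ι → ℝ) (i₀ : ι) {lam : ℝ}
    (hlam : 0 < lam) {C : ℝ} (hC : ((Fintype.card ι : ℝ) - 1) * exp (-(C + 1)) ≤ C) :
    s i₀ - lam * C ≤ ∑ i, (exp (s i / lam) / ∑ j, exp (s j / lam)) * s i := by
  set Z := ∑ j, exp (s j / lam)
  have hZ : 0 < Z := sum_pos (fun j _ ↦ exp_pos _) ⟨i₀, mem_univ _⟩
  have hshift : ∀ i, exp (s i / lam) * (s i - s i₀ + lam * C)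
      = lam * exp (s i₀ / lam) * (exp ((s i - s i₀) / lam) * ((s i - s i₀) / lam + C)) := by
    intro i
    rw [sub_div, exp_sub]
    field_simp
  have hsum : 0 ≤ ∑ i, exp (s i / lam) * (s i - s i₀ + lam * C) := by
    simp only [hshift, ← mul_sum]
    have := sum_exp_mul_add_nonneg (fun i ↦ (s i - s i₀) / lam) (i₀ := i₀) (by simp) hC
    positivity
  have hweights : ∑ i, exp (s i / lam) / Z = 1 := by
    rw [← sum_div]
    exact div_self hZ.ne'
  have hgap : ∑ i, exp (s i / lam) / Z * s i - (s i₀ - lam * C)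
      = (∑ i, exp (s i / lam) * (s i - s i₀ + lam * C)) / Z := calc
    _ = ∑ i, exp (s i / lam) / Z * s i - (∑ i, exp (s i / lam) / Z) * (s i₀ - lam * C) := by
      rw [hweights, one_mul]
    _ = (∑ i, exp (s i / lam) * (s i - s i₀ + lam * C)) / Z := by
      rw [sum_mul, ← sum_sub_distrib, sum_div]
      exact sum_congr rfl fun i _ ↦ by ring
  rw [← sub_nonneg, hgap]
  positivity

theorem stmt0_general (q : ℕ) (hq : 1 ≤ q) (s : Fin q → ℝ) (lam : ℝ) (hlam : 0 < lam)
    (C : ℝ) (hC : C * exp C = ((q : ℝ) - 1) / exp 1) :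
    ∑ i, (exp (s i / lam) / ∑ j, exp (s j / lam)) * s i
      ≥ (univ.sup' ⟨⟨0, hq⟩, mem_univ _⟩ s) - lam * C := by
  obtain ⟨i₀, -, hi₀⟩ := exists_mem_eq_sup' ⟨⟨0, hq⟩, mem_univ _⟩ s
  have hC' : ((Fintype.card (Fin q) : ℝ) - 1) * exp (-(C + 1)) = C := by
    rw [eq_div_iff (exp_ne_zero 1)] at hC
    rw [Fintype.card_fin, ← hC, exp_neg, exp_add]
    field_simp
  rw [hi₀]
  exact sub_mul_le_sum_softmax_mul s i₀ hlam hC'.le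

/-- Softmax-weighted average lower bound: for any `s : Fin q → ℝ` and `λ > 0`,
`∑ i softmax_λ(s)_i s_i ≥ max_i s_i − λ C` where `C = W((q−1)/e)` is the Lambert W value,
i.e. the (unique) nonnegative real with `C * exp C = (q−1)/e`. -/
theorem stmt0 (q : ℕ) (hq : 1 ≤ q) (s : Fin q → ℝ) (lam : ℝ) (hlam : 0 < lam)
    (C : ℝ) (hC0 : 0 ≤ C) (hC : C * exp C = ((q : ℝ) - 1) / exp 1) :
    ∑ i, (exp (s i / lam) / ∑ j, exp (s j / lam)) * s i
      ≥ (univ.sup' ⟨⟨0, hq⟩, mem_univ _⟩ s) - lam * C :=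
  stmt0_general q hq s lam hlam C hC
end

section
/- For nonnegative reals t_1,...,t_{q-1}, the function η(t_1,...,t_{q-1}) = ∑_{i=1}^{q-1} t_i exp(−t_i) / (1 + ∑_{j=1}^{q-1} exp(−t_j)) is bounded above by C = W((q−1)/e), where W is the Lambert W function. -/
/-!
From `x - c ≤ exp (x - c - 1)` every term satisfies `(t_i - C) e^{-t_i} ≤ e^{-(1 + C)}`.
Summing, `∑ t_i e^{-t_i} - C ∑ e^{-t_j} ≤ (q - 1) e^{-(1 + C)}`, and the defining equation
`C e^C = (q - 1)/e` says that the right-hand side is `C`; adding `C` to both sides and dividing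
by `1 + ∑ e^{-t_j}` gives the bound.
-/

open Real Finset

lemma sub_mul_exp_neg_le (x c : ℝ) : (x - c) * exp (-x) ≤ exp (-(1 + c)) :=
  calc (x - c) * exp (-x) ≤ exp (x - (1 + c)) * exp (-x) := by
        gcongr
        linarith [add_one_le_exp (x - (1 + c))]
    _ = exp (-(1 + c)) := by rw [← exp_add]; ring_nf

lemma sum_mul_exp_neg_div_le {ι : Type*} [Fintype ι] (t : ι → ℝ) (C : ℝ)
    (hC : (Fintype.card ι : ℝ) ≤ C * exp (1 + C)) :
    ∑ i, t i * exp (-t i) / (1 + ∑ j, exp (-t j)) ≤ C := by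
  have hden : 0 < 1 + ∑ j, exp (-t j) := by positivity
  rw [← sum_div, div_le_iff₀ hden]
  have hcard : (Fintype.card ι : ℝ) * exp (-(1 + C)) ≤ C := by
    rw [exp_neg, ← div_eq_mul_inv, div_le_iff₀ (exp_pos _)]
    exact hC
  have hsum : ∑ i, (t i - C) * exp (-t i) ≤ Fintype.card ι * exp (-(1 + C)) := by
    simpa using sum_le_sum fun i (_ : i ∈ univ) => sub_mul_exp_neg_le (t i) C
  simp only [sub_mul, sum_sub_distrib, ← mul_sum] at hsum
  linarith

theorem stmt1_general (q : ℕ) (hq : 2 ≤ q) (t : Fin (q - 1) → ℝ)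
    (C : ℝ) (hC : C * exp C = ((q : ℝ) - 1) / exp 1) :
    ∑ i, t i * exp (-t i) / (1 + ∑ j, exp (-t j)) ≤ C := by
  apply sum_mul_exp_neg_div_le
  have hcard : (Fintype.card (Fin (q - 1)) : ℝ) = q - 1 := by
    rw [Fintype.card_fin, Nat.cast_sub (by omega), Nat.cast_one]
  rw [hcard, exp_add, mul_left_comm, hC, mul_div_cancel₀ _ (exp_pos 1).ne']

/-- For nonnegative `t_1,…,t_{q−1}`, the function
`η(t) = ∑ i t_i e^{−t_i} / (1 + ∑ j e^{−t_j})` is bounded above by `C = W((q−1)/e)`,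
where `C` is the Lambert W value, i.e. `0 ≤ C` and `C * exp C = (q−1)/e`. -/
theorem stmt1 (q : ℕ) (hq : 2 ≤ q) (t : Fin (q - 1) → ℝ) (ht : ∀ i, 0 ≤ t i)
    (C : ℝ) (hC0 : 0 ≤ C) (hC : C * exp C = ((q : ℝ) - 1) / exp 1) :
    ∑ i, t i * exp (-t i) / (1 + ∑ j, exp (-t j)) ≤ C :=
  stmt1_general q hq t C hC
end

section
/- Let f be an integrable random function on a finite set X and let q ≥ 1. For a query X = (x_1,...,x_q) and a response r ∈ {1,...,q}, suppose responses are noise-free: r(X) = argmax_i f(x_i) almost surely. Then for any query X, E[max_i f(x_i)] ≤ E[max_{x∈X} E[f(x) | r(X)]], i.e., qEUBO(X) ≤ V(X). -/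
open MeasureTheory Finset

/-! On the event `{r = j}` the noise-free maximum `max_i f(x_i)` equals `f(x_j)`, so its
expectation is `∑_j ∫_{r = j} f(x_j) = ∑_j ∫_{r = j} E[f(x_j) | r]`, since `{r = j}` is
`σ(r)`-measurable. This is the expectation of `E[f(x_r) | r]`, which is pointwise at most
`max_{y ∈ X} E[f(y) | r]`. -/

theorem Set.iUnion_preimage_singleton_eq_univ {α ι : Type*} (r : α → ι) :
    ⋃ i, r ⁻¹' {i} = Set.univ := by
  ext
  simp

theorem Set.eqOn_comp_preimage_singleton {α ι β : Type*} {r : α → ι} {g : ι → α → β} (i : ι) :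
    Set.EqOn (fun a => g (r a) a) (g i) (r ⁻¹' {i}) := by
  rintro a rfl
  rfl

section Fibers

variable {Ω : Type*} [MeasurableSpace Ω] {μ : Measure Ω}

theorem MeasureTheory.Integrable.finset_sup' {ι : Type*} {s : Finset ι} (hs : s.Nonempty)
    {g : ι → Ω → ℝ} (hg : ∀ i ∈ s, Integrable (g i) μ) :
    Integrable (fun ω => s.sup' hs fun i => g i ω) μ := by
  induction hs using Finset.Nonempty.cons_induction with
  | singleton a => simpa using hg a
  | cons a s ha hs ih =>
    simp only [Finset.forall_mem_cons] at hg
    simp only [Finset.sup'_cons hs]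
    exact hg.1.sup (ih hg.2)

variable {E : Type*} [NormedAddCommGroup E]
  {ι : Type*} [Fintype ι] [MeasurableSpace ι] [MeasurableSingletonClass ι]
  {r : Ω → ι} {g : ι → Ω → E}

theorem integrable_comp_of_measurable (hr : Measurable r) (hg : ∀ i, Integrable (g i) μ) :
    Integrable (fun ω => g (r ω) ω) μ := by
  rw [← integrableOn_univ, ← Set.iUnion_preimage_singleton_eq_univ r, integrableOn_finite_iUnion]
  exact fun i => (hg i).integrableOn.congr_fun (Set.eqOn_comp_preimage_singleton i).symm
    (hr (measurableSet_singleton i))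

theorem integral_comp_eq_sum_setIntegral_preimage [NormedSpace ℝ E] (hr : Measurable r)
    (hg : ∀ i, Integrable (g i) μ) :
    ∫ ω, g (r ω) ω ∂μ = ∑ i, ∫ ω in r ⁻¹' {i}, g i ω ∂μ := by
  have hfiber : ∀ i, MeasurableSet (r ⁻¹' {i}) := fun i => hr (measurableSet_singleton i)
  rw [← setIntegral_univ, ← Set.iUnion_preimage_singleton_eq_univ r,
    integral_iUnion_fintype hfiber (pairwise_disjoint_fiber r) fun i =>
      (integrable_comp_of_measurable hr hg).integrableOn]
  exact Finset.sum_congr rfl fun i _ =>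
    setIntegral_congr_fun (hfiber i) (Set.eqOn_comp_preimage_singleton i)

theorem integral_condExp_comp_eq [NormedSpace ℝ E] [CompleteSpace E] [IsFiniteMeasure μ]
    (hr : Measurable r) (hg : ∀ i, Integrable (g i) μ) :
    ∫ ω, (μ[g (r ω) | MeasurableSpace.comap r ‹_›]) ω ∂μ = ∫ ω, g (r ω) ω ∂μ := by
  rw [integral_comp_eq_sum_setIntegral_preimage hr fun i => integrable_condExp,
    integral_comp_eq_sum_setIntegral_preimage hr hg]
  exact Finset.sum_congr rfl fun i _ =>
    setIntegral_condExp hr.comap_le (hg i) (comap_measurable r (measurableSet_singleton i))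

end Fibers

theorem stmt3_general
    {Ω : Type*} [MeasurableSpace Ω] (μ : Measure Ω) [IsProbabilityMeasure μ]
    {X : Type*} [Fintype X] [Nonempty X]
    (q : ℕ) (hq : 1 ≤ q)
    (f : X → Ω → ℝ) (hint : ∀ y, Integrable (f y) μ)
    (x : Fin q → X) (r : Ω → Fin q) (hr : Measurable r)
    (hnoisefree : ∀ᵐ ω ∂μ, ∀ i, f (x i) ω ≤ f (x (r ω)) ω) :
    ∫ ω, (univ.sup' ⟨⟨0, hq⟩, mem_univ _⟩ fun i => f (x i) ω) ∂μ
      ≤ ∫ ω, (univ.sup' univ_nonempty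
            fun y => (μ[f y | MeasurableSpace.comap r inferInstance]) ω) ∂μ := by
  calc ∫ ω, (univ.sup' ⟨⟨0, hq⟩, mem_univ _⟩ fun i => f (x i) ω) ∂μ
      = ∫ ω, f (x (r ω)) ω ∂μ := by
        refine integral_congr_ae ?_
        filter_upwards [hnoisefree] with ω hω
        exact le_antisymm (sup'_le _ _ fun i _ => hω i)
          (le_sup' (fun i => f (x i) ω) (mem_univ _))
    _ = ∫ ω, (μ[f (x (r ω)) | MeasurableSpace.comap r inferInstance]) ω ∂μ :=
        (integral_condExp_comp_eq (g := fun i => f (x i)) hr fun i => hint (x i)).symm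
    _ ≤ _ := integral_mono
        (integrable_comp_of_measurable (g := fun i => μ[f (x i) | _]) hr
          fun _ => integrable_condExp)
        (Integrable.finset_sup' _ fun _ _ => integrable_condExp)
        fun ω => le_sup' (fun y => (μ[f y | MeasurableSpace.comap r inferInstance]) ω)
          (mem_univ _)

/-- With noise-free responses (`r` a.s. picks an index attaining `max_i f(x_i)`),
for any query `x = (x_1,…,x_q)`:
`E[max_i f(x_i)] ≤ E[max_{y ∈ X} E[f(y) | r]]`, i.e. `qEUBO(x) ≤ V(x)`. -/
theorem stmt3
    {Ω : Type*} [MeasurableSpace Ω] (μ : Measure Ω) [IsProbabilityMeasure μ]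
    {X : Type*} [Fintype X] [Nonempty X]
    (q : ℕ) (hq : 1 ≤ q)
    (f : X → Ω → ℝ) (hmeas : ∀ y, Measurable (f y)) (hint : ∀ y, Integrable (f y) μ)
    (x : Fin q → X) (r : Ω → Fin q) (hr : Measurable r)
    (hnoisefree : ∀ᵐ ω ∂μ, ∀ i, f (x i) ω ≤ f (x (r ω)) ω) :
    ∫ ω, (univ.sup' ⟨⟨0, hq⟩, mem_univ _⟩ fun i => f (x i) ω) ∂μ
      ≤ ∫ ω, (univ.sup' univ_nonempty
            fun y => (μ[f y | MeasurableSpace.comap r inferInstance]) ω) ∂μ :=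
  stmt3_general μ q hq f hint x r hr hnoisefree
end

section
/- Under noise-free responses, every maximizer of qEUBO over queries X ∈ X^q is also a maximizer of the one-step value V(X) = E[max_{x∈X} E[f(x) | r(X)]]. -/
/-!
Conditioning on the response `r(Q)` is conditioning on a finite partition of `Ω`, so every
conditional expectation `E[f y | r(Q)]` is constant on each cell `{r(Q) = i}`. On that cell the
maximum over `y` is therefore attained by a single point `σ i`, and integrating cell by cell gives
`V(Q) = E[f(σ(r(Q)))] ≤ qEUBO(σ) ≤ qEUBO(X*)`. Conversely, under noise-free responses
`qEUBO(Q) = E[f(Q(r(Q)))]`, which integrates cell by cell to `E[E[f(Q i) | r(Q)]]` with `i = r(Q)`,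
so `qEUBO(Q) ≤ V(Q)`. Hence `V(Q) ≤ qEUBO(X*) ≤ V(X*)`.
-/

open MeasureTheory Finset

lemma apply_comp_eq_sum_indicator {Ω ι : Type*} [Fintype ι] {p : Ω → ι} (F : ι → Ω → ℝ)
    (ω : Ω) :
    F (p ω) ω = ∑ i, (p ⁻¹' {i}).indicator (F i) ω := by
  classical
  rw [Finset.sum_eq_single (p ω)]
  · simp
  · intro i _ hi
    simp [Ne.symm hi]
  · simp

section

variable {Ω ι X : Type*} [MeasurableSpace Ω] {μ : Measure Ω}

lemma integrable_finset_sup' {s : Finset ι} (hs : s.Nonempty) {g : ι → Ω → ℝ}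
    (hg : ∀ i, Integrable (g i) μ) : Integrable (fun ω => s.sup' hs fun i => g i ω) μ := by
  have hsup : (fun ω => s.sup' hs fun i => g i ω) = s.sup' hs g := by
    ext ω
    rw [Finset.sup'_apply]
  rw [hsup]
  exact Finset.sup'_induction (p := fun g => Integrable g μ) hs g
    (fun _ h₁ _ h₂ => h₁.sup h₂) fun i _ => hg i

lemma integral_sup'_eq_integral_apply_of_ae_le [Fintype ι] {p : Ω → ι}
    (hι : (univ : Finset ι).Nonempty) {g : ι → Ω → ℝ} (h : ∀ᵐ ω ∂μ, ∀ i, g i ω ≤ g (p ω) ω) :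
    ∫ ω, (univ.sup' hι fun i => g i ω) ∂μ = ∫ ω, g (p ω) ω ∂μ := by
  refine integral_congr_ae ?_
  filter_upwards [h] with ω hω
  exact le_antisymm (Finset.sup'_le _ _ fun i _ => hω i)
    (Finset.le_sup' (fun i => g i ω) (mem_univ (p ω)))

lemma exists_sup'_condExp_eq_condExp_apply_comp [MeasurableSpace ι] {p : Ω → ι}
    [Fintype X] [Nonempty X] (f : X → Ω → ℝ) :
    ∃ σ : ι → X, ∀ ω, (univ.sup' univ_nonempty
        fun y => (μ[f y | MeasurableSpace.comap p ‹_›]) ω)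
      = (μ[f (σ (p ω)) | MeasurableSpace.comap p ‹_›]) ω := by
  choose φ _ hφ using fun y =>
    (stronglyMeasurable_condExp (f := f y) (μ := μ)
      (m := MeasurableSpace.comap p ‹_›)).exists_eq_measurable_comp
  choose σ _ hσ using fun i => Finset.exists_mem_eq_sup' univ_nonempty fun y => φ y i
  refine ⟨σ, fun ω => ?_⟩
  simp only [hφ, Function.comp_apply]
  exact hσ (p ω)

variable [Fintype ι] [MeasurableSpace ι] [MeasurableSingletonClass ι] {p : Ω → ι}

lemma integrable_apply_comp (hp : Measurable p) {F : ι → Ω → ℝ}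
    (hF : ∀ i, Integrable (F i) μ) : Integrable (fun ω => F (p ω) ω) μ := by
  simp_rw [apply_comp_eq_sum_indicator F]
  exact integrable_finsetSum _ fun i _ => (hF i).indicator (hp (measurableSet_singleton i))

lemma integral_apply_comp_eq_sum (hp : Measurable p) {F : ι → Ω → ℝ}
    (hF : ∀ i, Integrable (F i) μ) :
    ∫ ω, F (p ω) ω ∂μ = ∑ i, ∫ ω in p ⁻¹' {i}, F i ω ∂μ := by
  simp_rw [apply_comp_eq_sum_indicator F]
  rw [integral_finsetSum _ fun i _ => (hF i).indicator (hp (measurableSet_singleton i))]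
  exact Finset.sum_congr rfl fun i _ => integral_indicator (hp (measurableSet_singleton i))

lemma integral_condExp_comap_apply_comp [IsFiniteMeasure μ] (hp : Measurable p)
    {F : ι → Ω → ℝ} (hF : ∀ i, Integrable (F i) μ) :
    ∫ ω, (μ[F (p ω) | MeasurableSpace.comap p ‹_›]) ω ∂μ = ∫ ω, F (p ω) ω ∂μ := by
  rw [integral_apply_comp_eq_sum hp fun _ => integrable_condExp,
    integral_apply_comp_eq_sum hp hF]
  refine Finset.sum_congr rfl fun i _ => setIntegral_condExp hp.comap_le (hF i) ?_
  exact ⟨{i}, measurableSet_singleton i, rfl⟩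

lemma integral_apply_comp_le_integral_sup' (hp : Measurable p) {s : Finset X}
    (hs : s.Nonempty) {g : X → Ω → ℝ} (hg : ∀ y, Integrable (g y) μ) {σ : ι → X}
    (hσ : ∀ i, σ i ∈ s) :
    ∫ ω, g (σ (p ω)) ω ∂μ ≤ ∫ ω, (s.sup' hs fun y => g y ω) ∂μ :=
  integral_mono (integrable_apply_comp hp fun i => hg (σ i)) (integrable_finset_sup' hs hg)
    fun ω => Finset.le_sup' (fun y => g y ω) (hσ (p ω))

variable [Fintype X] [Nonempty X] [IsFiniteMeasure μ]

lemma integral_apply_comp_le_integral_sup'_condExp (hp : Measurable p)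
    {f : X → Ω → ℝ} (hf : ∀ y, Integrable (f y) μ) (Q : ι → X) :
    ∫ ω, f (Q (p ω)) ω ∂μ
      ≤ ∫ ω, (univ.sup' univ_nonempty
          fun y => (μ[f y | MeasurableSpace.comap p ‹_›]) ω) ∂μ := by
  rw [← integral_condExp_comap_apply_comp hp fun i => hf (Q i)]
  exact integral_apply_comp_le_integral_sup' hp univ_nonempty (fun _ => integrable_condExp)
    fun i => mem_univ (Q i)

lemma exists_integral_sup'_condExp_eq (hp : Measurable p)
    {f : X → Ω → ℝ} (hf : ∀ y, Integrable (f y) μ) :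
    ∃ σ : ι → X, ∫ ω, (univ.sup' univ_nonempty
        fun y => (μ[f y | MeasurableSpace.comap p ‹_›]) ω) ∂μ = ∫ ω, f (σ (p ω)) ω ∂μ := by
  obtain ⟨σ, hσ⟩ := exists_sup'_condExp_eq_condExp_apply_comp (μ := μ) (p := p) f
  refine ⟨σ, ?_⟩
  simp_rw [hσ]
  exact integral_condExp_comap_apply_comp hp fun i => hf (σ i)

end

theorem stmt4_general
    {Ω : Type*} [MeasurableSpace Ω] (μ : Measure Ω) [IsProbabilityMeasure μ]
    {X : Type*} [Fintype X] [Nonempty X]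
    (q : ℕ) (hq : 1 ≤ q)
    (f : X → Ω → ℝ) (hint : ∀ y, Integrable (f y) μ)
    (r : (Fin q → X) → Ω → Fin q) (hr : ∀ Q, Measurable (r Q))
    (hnoisefree : ∀ Q : Fin q → X, ∀ᵐ ω ∂μ, ∀ i, f (Q i) ω ≤ f (Q (r Q ω)) ω)
    (Xstar : Fin q → X)
    (hXstar : ∀ Q : Fin q → X,
      ∫ ω, (univ.sup' ⟨⟨0, hq⟩, mem_univ _⟩ fun i => f (Q i) ω) ∂μ
        ≤ ∫ ω, (univ.sup' ⟨⟨0, hq⟩, mem_univ _⟩ fun i => f (Xstar i) ω) ∂μ) :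
    ∀ Q : Fin q → X,
      ∫ ω, (univ.sup' univ_nonempty
          fun y => (μ[f y | MeasurableSpace.comap (r Q) inferInstance]) ω) ∂μ
        ≤ ∫ ω, (univ.sup' univ_nonempty
            fun y => (μ[f y | MeasurableSpace.comap (r Xstar) inferInstance]) ω) ∂μ := by
  intro Q
  obtain ⟨σ, hσ⟩ := exists_integral_sup'_condExp_eq (hr Q) hint
  calc _ = ∫ ω, f (σ (r Q ω)) ω ∂μ := hσ
    _ ≤ ∫ ω, (univ.sup' ⟨⟨0, hq⟩, mem_univ _⟩ fun i => f (σ i) ω) ∂μ :=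
      integral_apply_comp_le_integral_sup' (hr Q) _ (fun _ => hint _) mem_univ
    _ ≤ ∫ ω, (univ.sup' ⟨⟨0, hq⟩, mem_univ _⟩ fun i => f (Xstar i) ω) ∂μ := hXstar σ
    _ = ∫ ω, f (Xstar (r Xstar ω)) ω ∂μ :=
      integral_sup'_eq_integral_apply_of_ae_le _ (hnoisefree Xstar)
    _ ≤ _ := integral_apply_comp_le_integral_sup'_condExp (hr Xstar) hint Xstar

/-- Under noise-free responses, every maximizer of `qEUBO` over queries `Q ∈ X^q`
is also a maximizer of the one-step value `V(Q) = E[max_{y ∈ X} E[f(y) | r(Q)]]`,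
where `qEUBO(Q) = E[max_i f(Q_i)]`. -/
theorem stmt4
    {Ω : Type*} [MeasurableSpace Ω] (μ : Measure Ω) [IsProbabilityMeasure μ]
    {X : Type*} [Fintype X] [Nonempty X]
    (q : ℕ) (hq : 1 ≤ q)
    (f : X → Ω → ℝ) (hmeas : ∀ y, Measurable (f y)) (hint : ∀ y, Integrable (f y) μ)
    (r : (Fin q → X) → Ω → Fin q) (hr : ∀ Q, Measurable (r Q))
    (hnoisefree : ∀ Q : Fin q → X, ∀ᵐ ω ∂μ, ∀ i, f (Q i) ω ≤ f (Q (r Q ω)) ω)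
    (Xstar : Fin q → X)
    (hXstar : ∀ Q : Fin q → X,
      ∫ ω, (univ.sup' ⟨⟨0, hq⟩, mem_univ _⟩ fun i => f (Q i) ω) ∂μ
        ≤ ∫ ω, (univ.sup' ⟨⟨0, hq⟩, mem_univ _⟩ fun i => f (Xstar i) ω) ∂μ) :
    ∀ Q : Fin q → X,
      ∫ ω, (univ.sup' univ_nonempty
          fun y => (μ[f y | MeasurableSpace.comap (r Q) inferInstance]) ω) ∂μ
        ≤ ∫ ω, (univ.sup' univ_nonempty
            fun y => (μ[f y | MeasurableSpace.comap (r Xstar) inferInstance]) ω) ∂μ :=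
  stmt4_general μ q hq f hint r hr hnoisefree Xstar hXstar
end

section
/- Suppose the DM's response to query X = (x_1,...,x_q) follows the logistic likelihood P(r=i | f(X)) = exp(f(x_i)/λ)/∑_j exp(f(x_j)/λ) with λ > 0. Then U^λ(X) := E[f(x_{r(X)})] ≥ qEUBO(X) − λC where C = W((q−1)/e) and qEUBO(X) = E[max_i f(x_i)]. -/
open MeasureTheory Finset Real

/-! Conditioning on `f(X)` (the tower property) turns `E[f(x_r)]` into `E[∑ᵢ f(xᵢ) pᵢ]`, where
`p` is the softmax of `f(X)/λ`. Pointwise, with `M = maxᵢ sᵢ`, one has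
`∑ᵢ e^{sᵢ/λ} (M - λC - sᵢ) ≤ 0`: the maximizing term is `-λC e^{M/λ}`, and by `t ≤ e^{t-1}` each
of the other `q - 1` terms is at most `λ e^{M/λ - 1 - C}`; these sum to `λC e^{M/λ}` exactly
because `C e^C = (q - 1)/e`. -/

noncomputable def softmax {ι : Type*} [Fintype ι] (lam : ℝ) (s : ι → ℝ) (i : ι) : ℝ :=
  exp (s i / lam) / ∑ j, exp (s j / lam)

section Softmax

variable {ι : Type*} [Fintype ι]

lemma softmax_nonneg (lam : ℝ) (s : ι → ℝ) (i : ι) : 0 ≤ softmax lam s i := by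
  unfold softmax; positivity

lemma softmax_le_one (lam : ℝ) (s : ι → ℝ) (i : ι) : softmax lam s i ≤ 1 :=
  div_le_one_of_le₀
    (single_le_sum (f := fun j => exp (s j / lam)) (fun _ _ => (exp_pos _).le) (mem_univ i))
    (sum_nonneg fun _ _ => (exp_pos _).le)

lemma exp_div_mul_sub_le {lam : ℝ} (hlam : 0 < lam) (a M C : ℝ) :
    exp (a / lam) * (M - lam * C - a) ≤ lam * exp (M / lam - 1 - C) := by
  set t := (M - a) / lam - C
  have ht : t ≤ exp (t - 1) := by linarith [add_one_le_exp (t - 1)]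
  calc exp (a / lam) * (M - lam * C - a) = lam * (exp (a / lam) * t) := by
        simp only [t]; field_simp; ring
    _ ≤ lam * (exp (a / lam) * exp (t - 1)) := by gcongr
    _ = lam * exp (M / lam - 1 - C) := by
        rw [← exp_add]; congr 2; simp only [t]; field_simp; ring

theorem sup'_sub_le_sum_mul_softmax (hι : (univ : Finset ι).Nonempty) (s : ι → ℝ) {lam C : ℝ}
    (hlam : 0 < lam) (hC : C * exp C = (Fintype.card ι - 1) / exp 1) :
    univ.sup' hι s - lam * C ≤ ∑ i, s i * softmax lam s i := by
  classical
  set M := univ.sup' hι s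
  obtain ⟨i₀, -, hi₀⟩ := exists_mem_eq_sup' hι s
  have hZ : 0 < ∑ j, exp (s j / lam) := sum_pos (fun _ _ => exp_pos _) hι
  have hcard : ((Fintype.card ι : ℝ) - 1) * exp (-1 - C) = C := by
    rw [eq_div_iff (exp_pos 1).ne'] at hC
    rw [← hC, mul_assoc, mul_assoc, ← exp_add, ← exp_add,
      show C + (1 + (-1 - C)) = 0 by ring, exp_zero, mul_one]
  have hrest : ∑ i ∈ univ.erase i₀, exp (s i / lam) * (M - lam * C - s i)
      ≤ lam * C * exp (M / lam) := by
    calc _ ≤ ∑ _i ∈ univ.erase i₀, lam * exp (M / lam - 1 - C) :=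
          sum_le_sum fun i _ => exp_div_mul_sub_le hlam (s i) M C
      _ = lam * C * exp (M / lam) := by
          rw [sum_const, card_erase_of_mem (mem_univ _), card_univ, nsmul_eq_mul,
            Nat.cast_pred (card_univ (α := ι) ▸ hι.card_pos),
            show M / lam - 1 - C = M / lam + (-1 - C) by ring, exp_add]
          linear_combination lam * exp (M / lam) * hcard
  have key : ∑ i, exp (s i / lam) * (M - lam * C - s i) ≤ 0 := by
    rw [← add_sum_erase _ _ (mem_univ i₀), ← hi₀]
    linarith
  have hsum : ∑ i, s i * softmax lam s i = (∑ i, s i * exp (s i / lam)) / ∑ j, exp (s j / lam) := by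
    simp only [softmax, sum_div, mul_div_assoc]
  have hexpand : (M - lam * C) * ∑ j, exp (s j / lam) - ∑ i, s i * exp (s i / lam)
      = ∑ i, exp (s i / lam) * (M - lam * C - s i) := by
    rw [mul_sum, ← sum_sub_distrib]
    exact sum_congr rfl fun i _ => by ring
  rw [hsum, le_div_iff₀ hZ]
  linarith

end Softmax

namespace MeasureTheory

variable {Ω : Type*} {m m0 : MeasurableSpace Ω} {μ : Measure Ω}

theorem Integrable.finset_sup'_s6 {ι β : Type*} [NormedAddCommGroup β] [Lattice β] [HasSolidNorm β]
    [IsOrderedAddMonoid β] {s : Finset ι} (hs : s.Nonempty) {f : ι → Ω → β}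
    (hf : ∀ i ∈ s, Integrable (f i) μ) : Integrable (fun ω => s.sup' hs fun i => f i ω) μ := by
  refine (sup'_induction (p := fun φ : Ω → β => Integrable φ μ) hs f
    (fun _ h₁ _ h₂ => h₁.sup h₂) hf).congr (ae_of_all _ fun ω => ?_)
  exact Finset.sup'_apply _ _ _

theorem integral_mul_condExp_of_stronglyMeasurable_left (hm : m ≤ m0) [SigmaFinite (μ.trim hm)]
    {f g : Ω → ℝ} (hf : StronglyMeasurable[m] f) (hfg : Integrable (f * g) μ)
    (hg : Integrable g μ) : ∫ ω, f ω * (μ[g | m]) ω ∂μ = ∫ ω, f ω * g ω ∂μ := by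
  calc ∫ ω, f ω * (μ[g | m]) ω ∂μ = ∫ ω, (μ[f * g | m]) ω ∂μ :=
        integral_congr_ae (condExp_mul_of_stronglyMeasurable_left hf hfg hg).symm
    _ = ∫ ω, f ω * g ω ∂μ := integral_condExp hm

theorem integral_comp_eq_sum_integral_mul_condExp {ι : Type*} [Fintype ι] [MeasurableSpace ι]
    [MeasurableSingletonClass ι] [DecidableEq ι] [IsFiniteMeasure μ] (hm : m ≤ m0) {g : ι → Ω → ℝ}
    (hg_meas : ∀ i, StronglyMeasurable[m] (g i)) (hg : ∀ i, Integrable (g i) μ) {r : Ω → ι}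
    (hr : Measurable r) :
    ∫ ω, g (r ω) ω ∂μ
      = ∑ i, ∫ ω, g i ω * (μ[fun ω => if r ω = i then (1 : ℝ) else 0 | m]) ω ∂μ := by
  have hind_meas : ∀ i, Measurable fun ω => if r ω = i then (1 : ℝ) else 0 := fun i =>
    Measurable.ite (hr (measurableSet_singleton i)) measurable_const measurable_const
  have hind_le : ∀ i, ∀ᵐ ω ∂μ, ‖if r ω = i then (1 : ℝ) else 0‖ ≤ 1 := fun i =>
    ae_of_all _ fun ω => by split_ifs <;> simp
  have hprod : ∀ i, Integrable (fun ω => g i ω * if r ω = i then (1 : ℝ) else 0) μ := fun i =>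
    (hg i).mul_bdd (hind_meas i).aestronglyMeasurable (hind_le i)
  calc ∫ ω, g (r ω) ω ∂μ = ∫ ω, ∑ i, g i ω * (if r ω = i then (1 : ℝ) else 0) ∂μ := by
        simp only [mul_ite, mul_one, mul_zero, sum_ite_eq, mem_univ, if_true]
    _ = ∑ i, ∫ ω, g i ω * (if r ω = i then (1 : ℝ) else 0) ∂μ :=
        integral_finsetSum _ fun i _ => hprod i
    _ = _ := sum_congr rfl fun i _ =>
        (integral_mul_condExp_of_stronglyMeasurable_left hm (hg_meas i) (hprod i)
          ((integrable_const 1).mono' (hind_meas i).aestronglyMeasurable (hind_le i))).symm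

end MeasureTheory

theorem stmt6_general
    {Ω : Type*} [MeasurableSpace Ω] (μ : Measure Ω) [IsProbabilityMeasure μ]
    {X : Type*}
    (q : ℕ) (hq : 1 ≤ q)
    (f : X → Ω → ℝ) (hmeas : ∀ y, Measurable (f y)) (hint : ∀ y, Integrable (f y) μ)
    (x : Fin q → X) (r : Ω → Fin q) (hr : Measurable r)
    (lam : ℝ) (hlam : 0 < lam)
    (C : ℝ) (hC : C * exp C = ((q : ℝ) - 1) / exp 1)
    (hlik : ∀ i : Fin q,
      (μ[(fun ω => if r ω = i then (1 : ℝ) else 0) |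
          MeasurableSpace.comap (fun ω (i : Fin q) => f (x i) ω) inferInstance])
        =ᵐ[μ] fun ω => exp (f (x i) ω / lam) / ∑ j, exp (f (x j) ω / lam)) :
    ∫ ω, f (x (r ω)) ω ∂μ
      ≥ (∫ ω, (univ.sup' ⟨⟨0, hq⟩, mem_univ _⟩ fun i => f (x i) ω) ∂μ) - lam * C := by
  set F : Ω → Fin q → ℝ := fun ω i => f (x i) ω
  have hF : Measurable F := measurable_pi_lambda _ fun i => hmeas (x i)
  have hF_meas : ∀ i, StronglyMeasurable[MeasurableSpace.comap F inferInstance] (f (x i)) :=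
    fun i => ((measurable_pi_apply i).comp (comap_measurable F)).stronglyMeasurable
  have hsoftmax : ∀ i, Integrable (fun ω => f (x i) ω * softmax lam (F ω) i) μ := fun i =>
    (hint (x i)).mul_bdd (Measurable.aestronglyMeasurable (by unfold softmax; fun_prop))
      (ae_of_all _ fun ω => by
        rw [Real.norm_of_nonneg (softmax_nonneg _ _ _)]; exact softmax_le_one _ _ _)
  have hsup : Integrable (fun ω => univ.sup' ⟨⟨0, hq⟩, mem_univ _⟩ (F ω)) μ :=
    Integrable.finset_sup'_s6 _ fun i _ => hint (x i)
  calc (∫ ω, univ.sup' _ (F ω) ∂μ) - lam * C = ∫ ω, (univ.sup' _ (F ω) - lam * C) ∂μ := by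
        rw [integral_sub hsup (integrable_const _), integral_const, probReal_univ, one_smul]
    _ ≤ ∫ ω, ∑ i, f (x i) ω * softmax lam (F ω) i ∂μ :=
        integral_mono (hsup.sub (integrable_const _)) (integrable_finsetSum _ fun i _ => hsoftmax i)
          fun ω => sup'_sub_le_sum_mul_softmax _ (F ω) hlam (by simpa using hC)
    _ = ∑ i, ∫ ω, f (x i) ω * softmax lam (F ω) i ∂μ := integral_finsetSum _ fun i _ => hsoftmax i
    _ = ∑ i, ∫ ω, f (x i) ω * (μ[fun ω => if r ω = i then (1 : ℝ) else 0 |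
          MeasurableSpace.comap F inferInstance]) ω ∂μ :=
        sum_congr rfl fun i _ => integral_congr_ae <|
          (hlik i).mono fun ω hω => congrArg (f (x i) ω * ·) hω.symm
    _ = ∫ ω, f (x (r ω)) ω ∂μ :=
        (integral_comp_eq_sum_integral_mul_condExp hF.comap_le hF_meas (fun i => hint (x i))
          hr).symm

/-- If the response `r` to the query `x = (x_1,…,x_q)` follows the logistic likelihood
`P(r = i | f(X)) = exp(f(x_i)/λ) / ∑_j exp(f(x_j)/λ)` (stated as a conditional
expectation of the indicator of `{r = i}` given the σ-algebra generated by
`(f(x_1),…,f(x_q))`), then `U^λ(X) = E[f(x_{r})] ≥ qEUBO(X) − λ C`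
where `C = W((q−1)/e)` is the Lambert W value. -/
theorem stmt6
    {Ω : Type*} [MeasurableSpace Ω] (μ : Measure Ω) [IsProbabilityMeasure μ]
    {X : Type*} [Fintype X] [Nonempty X]
    (q : ℕ) (hq : 1 ≤ q)
    (f : X → Ω → ℝ) (hmeas : ∀ y, Measurable (f y)) (hint : ∀ y, Integrable (f y) μ)
    (x : Fin q → X) (r : Ω → Fin q) (hr : Measurable r)
    (lam : ℝ) (hlam : 0 < lam)
    (C : ℝ) (hC0 : 0 ≤ C) (hC : C * exp C = ((q : ℝ) - 1) / exp 1)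
    (hlik : ∀ i : Fin q,
      (μ[(fun ω => if r ω = i then (1 : ℝ) else 0) |
          MeasurableSpace.comap (fun ω (i : Fin q) => f (x i) ω) inferInstance])
        =ᵐ[μ] fun ω => exp (f (x i) ω / lam) / ∑ j, exp (f (x j) ω / lam)) :
    ∫ ω, f (x (r ω)) ω ∂μ
      ≥ (∫ ω, (univ.sup' ⟨⟨0, hq⟩, mem_univ _⟩ fun i => f (x i) ω) ∂μ) - lam * C :=
  stmt6_general μ q hq f hmeas hint x r hr lam hlam C hC hlik
end

section
/- Let p_1, p_2 ≥ 0 with p_1 + p_2 = 1, let a ∈ (1/2, 1), and let q_1 ≥ a and q_2 ≤ 1 − a. Then h(p_1 q_1 + p_2 q_2) − p_1 h(q_1) − p_2 h(q_2) ≥ h(p_1 a + p_2 (1−a)) − h(a), where h is the binary entropy. -/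
/-!
Write `h` for the binary entropy and `M = p₁q₁ + p₂q₂`, `M' = p₁a + p₂q₂`. Lowering `q₁` to `a`
decreases the left-hand side by `h M - h M' - p₁ (h q₁ - h a)`. Since `M' ≤ a`, `M ≤ q₁` and
`M - M' = p₁ (q₁ - a)`, this is `≥ 0` because secant slopes of the concave `h` decrease when both
endpoints move right. Symmetrically, raising `q₂` to `1 - a` does not increase the left-hand side,
and at `(q₁, q₂) = (a, 1 - a)` it equals the right-hand side since `h (1 - a) = h a`.
-/

open Real

noncomputable def binEnt (t : ℝ) : ℝ := -t * Real.log t - (1 - t) * Real.log (1 - t)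

open Set

section Concave

variable {𝕜 : Type*} [Field 𝕜] [LinearOrder 𝕜] [IsStrictOrderedRing 𝕜] {s : Set 𝕜} {f : 𝕜 → 𝕜}
  {p x₁ x₂ y₁ y₂ : 𝕜}

lemma ConcaveOn.slope_le_slope_of_le (hf : ConcaveOn 𝕜 s f) (hx₁ : x₁ ∈ s) (hx₂ : x₂ ∈ s)
    (hy₁ : y₁ ∈ s) (hy₂ : y₂ ∈ s) (hx : x₁ < x₂) (hy : y₁ < y₂) (h₁ : x₁ ≤ y₁) (h₂ : x₂ ≤ y₂) :
    slope f y₁ y₂ ≤ slope f x₁ x₂ :=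
  calc slope f y₁ y₂ = slope f y₂ y₁ := slope_comm f y₁ y₂
    _ ≤ slope f y₂ x₁ := hf.slope_anti hy₂ ⟨hx₁, (hx.trans_le h₂).ne⟩ ⟨hy₁, hy.ne⟩ h₁
    _ = slope f x₁ y₂ := slope_comm f y₂ x₁
    _ ≤ slope f x₁ x₂ := hf.slope_anti hx₁ ⟨hx₂, hx.ne'⟩ ⟨hy₂, (hx.trans_le h₂).ne'⟩ h₂

lemma ConcaveOn.mul_sub_le_sub_of_le (hf : ConcaveOn 𝕜 s f) (hx₁ : x₁ ∈ s) (hx₂ : x₂ ∈ s)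
    (hy₁ : y₁ ∈ s) (hy₂ : y₂ ∈ s) (hp : 0 ≤ p) (hy : y₁ ≤ y₂) (h₁ : x₁ ≤ y₁) (h₂ : x₂ ≤ y₂)
    (hxy : x₂ - x₁ = p * (y₂ - y₁)) :
    p * (f y₂ - f y₁) ≤ f x₂ - f x₁ := by
  rcases hy.eq_or_lt with rfl | hy
  · obtain rfl : x₂ = x₁ := by simpa [sub_eq_zero] using hxy
    simp
  rcases hp.eq_or_lt with rfl | hp
  · obtain rfl : x₂ = x₁ := by simpa [sub_eq_zero] using hxy
    simp
  have hx : x₁ < x₂ := by nlinarith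
  have hslope := hf.slope_le_slope_of_le hx₁ hx₂ hy₁ hy₂ hx hy h₁ h₂
  rw [slope_def_field, slope_def_field, hxy, ← div_div, div_le_div_iff_of_pos_right (by linarith),
    le_div_iff₀ hp] at hslope
  linarith

lemma ConcaveOn.sub_le_mul_sub_of_le (hf : ConcaveOn 𝕜 s f) (hx₁ : x₁ ∈ s) (hx₂ : x₂ ∈ s)
    (hy₁ : y₁ ∈ s) (hy₂ : y₂ ∈ s) (hp : 0 ≤ p) (hy : y₁ ≤ y₂) (h₁ : y₁ ≤ x₁) (h₂ : y₂ ≤ x₂)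
    (hxy : x₂ - x₁ = p * (y₂ - y₁)) :
    f x₂ - f x₁ ≤ p * (f y₂ - f y₁) := by
  rcases hy.eq_or_lt with rfl | hy
  · obtain rfl : x₂ = x₁ := by simpa [sub_eq_zero] using hxy
    simp
  rcases hp.eq_or_lt with rfl | hp
  · obtain rfl : x₂ = x₁ := by simpa [sub_eq_zero] using hxy
    simp
  have hx : x₁ < x₂ := by nlinarith
  have hslope := hf.slope_le_slope_of_le hy₁ hy₂ hx₁ hx₂ hy hx h₁ h₂
  rw [slope_def_field, slope_def_field, hxy, ← div_div, div_le_div_iff_of_pos_right (by linarith),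
    div_le_iff₀ hp] at hslope
  linarith

end Concave

lemma binEnt_eq_binEntropy : binEnt = binEntropy := by
  funext t
  simp only [binEnt, binEntropy, Real.log_inv]
  ring

theorem stmt13_general (p₁ p₂ a q₁ q₂ : ℝ)
    (hp₁ : 0 ≤ p₁) (hp₂ : 0 ≤ p₂) (hps : p₁ + p₂ = 1)
    (ha : 1 / 2 < a)
    (hq₁ : a ≤ q₁) (hq₁1 : q₁ ≤ 1) (hq₂ : 0 ≤ q₂) (hq₂a : q₂ ≤ 1 - a) :
    binEnt (p₁ * q₁ + p₂ * q₂) - p₁ * binEnt q₁ - p₂ * binEnt q₂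
      ≥ binEnt (p₁ * a + p₂ * (1 - a)) - binEnt a := by
  have hconcave := strictConcave_binEntropy.concaveOn
  have mem {t : ℝ} (h0 : 0 ≤ t) (h1 : t ≤ 1) : t ∈ Icc (0 : ℝ) 1 := ⟨h0, h1⟩
  have raise_q₁ : p₁ * (binEntropy q₁ - binEntropy a)
      ≤ binEntropy (p₁ * q₁ + p₂ * q₂) - binEntropy (p₁ * a + p₂ * q₂) :=
    hconcave.mul_sub_le_sub_of_le
      (mem (by nlinarith) (by nlinarith)) (mem (by nlinarith) (by nlinarith))
      (mem (by linarith) (by linarith)) (mem (by linarith) hq₁1) hp₁ hq₁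
      (by nlinarith) (by nlinarith) (by ring)
  have raise_q₂ : binEntropy (p₁ * a + p₂ * (1 - a)) - binEntropy (p₁ * a + p₂ * q₂)
      ≤ p₂ * (binEntropy (1 - a) - binEntropy q₂) :=
    hconcave.sub_le_mul_sub_of_le
      (mem (by nlinarith) (by nlinarith)) (mem (by nlinarith) (by nlinarith))
      (mem hq₂ (by linarith)) (mem (by linarith) (by linarith)) hp₂ hq₂a
      (by nlinarith) (by nlinarith) (by ring)
  rw [binEntropy_one_sub] at raise_q₂
  rw [binEnt_eq_binEntropy]
  linear_combination raise_q₁ + raise_q₂ + binEntropy a * hps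

/-- For `p_1, p_2 ≥ 0` with `p_1 + p_2 = 1`, `a ∈ (1/2,1)`, `q_1 ≥ a`, `q_2 ≤ 1 − a`
(with `q_1, q_2 ∈ [0,1]`):
`h(p_1 q_1 + p_2 q_2) − p_1 h(q_1) − p_2 h(q_2) ≥ h(p_1 a + p_2 (1−a)) − h(a)`. -/
theorem stmt13 (p₁ p₂ a q₁ q₂ : ℝ)
    (hp₁ : 0 ≤ p₁) (hp₂ : 0 ≤ p₂) (hps : p₁ + p₂ = 1)
    (ha : 1 / 2 < a) (ha1 : a < 1)
    (hq₁ : a ≤ q₁) (hq₁1 : q₁ ≤ 1) (hq₂ : 0 ≤ q₂) (hq₂a : q₂ ≤ 1 - a) :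
    binEnt (p₁ * q₁ + p₂ * q₂) - p₁ * binEnt q₁ - p₂ * binEnt q₂
      ≥ binEnt (p₁ * a + p₂ * (1 - a)) - binEnt a :=
  stmt13_general p₁ p₂ a q₁ q₂ hp₁ hp₂ hps ha hq₁ hq₁1 hq₂ hq₂a
end
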